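/- Let q be a prime power and let M be a simple and cosimple GF(q)-representable matroid that has two distinct k-loose elements. Then r(M) ≤ (q+1)(k-1) + 2q. -/

import Mathlib

namespace Matroid

variable {α : Type*}

/-- A circuit of a matroid is a minimal dependent set. -/
def Circuit (M : Matroid α) (C : Set α) : Prop :=
  M.Dep C ∧ ∀ D, D ⊂ C → M.Indep D

/-- A coloop is an element belonging to every basis. -/
def Coloop (M : Matroid α) (e : α) : Prop :=
  e ∈ M.E ∧ ∀ B, M.IsBase B → e ∈ B

/-- A matroid is simple if every subset of the ground set with at most two
elements is independent. -/
def Simple (M : Matroid α) : Prop :=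
  ∀ e ∈ M.E, ∀ f ∈ M.E, M.Indep {e, f}

/-- The rank of a matroid: the supremum of the cardinalities of its bases. -/
noncomputable def rk (M : Matroid α) : ℕ :=
  sSup {n | ∃ B, M.IsBase B ∧ B.ncard = n}

/-- A matroid is representable over a field `F` if independence in `M` coincides
with linear independence under some assignment of vectors to ground set elements. -/
def RepresentableOver (M : Matroid α) (F : Type) [Field F] : Prop :=
  ∃ (n : ℕ) (φ : α → (Fin n → F)),
    ∀ I, I ⊆ M.E → (M.Indep I ↔ LinearIndependent F (fun x : I => φ x))

/-- An element `e` is `k`-loose if every circuit containing `e` has size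
greater than `r - k`, where `r` is the rank of the matroid. -/
def KLoose (M : Matroid α) (k : ℕ) (e : α) : Prop :=
  e ∈ M.E ∧ ∀ C, M.Circuit C → e ∈ C → M.rk - k < C.ncard

/-- A matroid is `k`-paving if every element is `k`-loose. -/
def KPaving (M : Matroid α) (k : ℕ) : Prop :=
  ∀ e ∈ M.E, M.KLoose k e

end Matroid

/-!
Choose a base `B` avoiding `e` and `f` (one exists because `{e, f}` is coindependent) and write
`e = ∑ u_b b`, `f = ∑ w_b b` over `B` in a representation. For every scalar `a ≠ 0` the vector
`e + a f` is the combination `u + a w`, so `{e, f} ∪ supp (u + a w)` is dependent while every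
circuit in it passes through the loose elements `e` or `f`; hence `r ≤ k + 1 + |supp (u + a w)|`,
and similarly `r ≤ k + |supp u|` and `r ≤ k + |supp w|`. A coordinate of `supp u ∪ supp w` is
nonzero in exactly `q` of the `q + 1` vectors `u + a w` (`a ∈ F`) and `w`, so these supports
have total size at most `q r`. Adding up the `q + 1` bounds gives
`(q + 1) r + 1 ≤ q (k + 1) + k + q r`.
-/

open Finset

lemma card_filter_add_mul_ne_zero_add {F : Type*} [Field F] [Fintype F] [DecidableEq F]
    {x y : F} (hxy : x ≠ 0 ∨ y ≠ 0) :
    #{a : F | x + a * y ≠ 0} + (if y ≠ 0 then 1 else 0) = Fintype.card F := by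
  by_cases hy : y = 0
  · simp [hy, hxy.resolve_right (not_not.2 hy)]
  · have hroot : ({a : F | x + a * y ≠ 0} : Finset F) = univ.erase (-x / y) := by
      ext a
      simp only [mem_filter, mem_erase, mem_univ, and_true, true_and]
      rw [ne_eq, ne_eq, eq_div_iff hy, eq_neg_iff_add_eq_zero, add_comm]
    rw [hroot, card_erase_of_mem (mem_univ _), card_univ, if_pos hy]
    have := Fintype.card_pos (α := F)
    omega

theorem Finsupp.sum_card_support_add_smul {F ι : Type*} [Field F] [Fintype F] [DecidableEq ι]
    (u w : ι →₀ F) :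
    ∑ a : F, #(u + a • w).support + #w.support = Fintype.card F * #(u.support ∪ w.support) := by
  classical
  set T := u.support ∪ w.support
  have hcard : ∀ g : ι →₀ F, g.support ⊆ T →
      #g.support = ∑ i ∈ T, if g i ≠ 0 then 1 else 0 := by
    intro g hg
    rw [← Finset.card_filter]
    congr 1
    ext i
    rw [Finset.mem_filter, Finsupp.mem_support_iff]
    exact ⟨fun h => ⟨hg (Finsupp.mem_support_iff.2 h), h⟩, And.right⟩
  have hsub : ∀ a : F, (u + a • w).support ⊆ T := fun a =>
    Finsupp.support_add.trans (Finset.union_subset_union subset_rfl Finsupp.support_smul)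
  rw [Finset.sum_congr rfl fun a _ => hcard _ (hsub a), hcard w Finset.subset_union_right,
    Finset.sum_comm, ← Finset.sum_add_distrib, mul_comm, ← smul_eq_mul, ← Finset.sum_const]
  refine Finset.sum_congr rfl fun i hi => ?_
  rw [← card_filter_add_mul_ne_zero_add (x := u i) (y := w i) (by simpa [T, or_comm] using hi),
    Finset.card_filter]
  simp only [Finsupp.add_apply, Finsupp.smul_apply, smul_eq_mul]
  congr!

namespace Matroid

variable {α : Type*} {M : Matroid α}

lemma circuit_iff_isCircuit {C : Set α} : M.Circuit C ↔ M.IsCircuit C := by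
  rw [isCircuit_iff_forall_ssubset]; rfl

lemma IsBase.rk_eq_ncard {B : Set α} (hB : M.IsBase B) : M.rk = B.ncard := by
  have h : {n | ∃ B', M.IsBase B' ∧ B'.ncard = n} = {B.ncard} := by
    ext n
    refine ⟨?_, fun hn => ⟨B, hB, hn.symm⟩⟩
    rintro ⟨B', hB', rfl⟩
    exact hB'.ncard_eq_ncard_of_isBase hB
  rw [rk, h, csSup_singleton]

lemma rk_sub_lt_ncard_of_dep {k : ℕ} {D S : Set α} (hD : M.Dep D) (hDfin : D.Finite)
    (hS : ∀ x ∈ S, M.KLoose k x) (hDS : M.Indep (D \ S)) : M.rk - k < D.ncard := by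
  obtain ⟨C, hCD, hC⟩ := hD.exists_isCircuit_subset
  obtain ⟨x, hxC, hxS⟩ : ∃ x ∈ C, x ∈ S := by
    by_contra! h
    exact hC.dep.not_indep (hDS.subset fun y hy => ⟨hCD hy, h y hy⟩)
  exact ((hS x hxS).2 C (circuit_iff_isCircuit.2 hC) hxC).trans_le (Set.ncard_le_ncard hCD hDfin)

def IsRep (F : Type*) {V : Type*} [Field F] [AddCommGroup V] [Module F V] (M : Matroid α)
    (φ : α → V) : Prop :=
  ∀ I ⊆ M.E, M.Indep I ↔ LinearIndepOn F φ I

section Representation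

variable {F V : Type*} [Field F] [AddCommGroup V] [Module F V] {φ : α → V}

lemma IsRep.dep_of_linearCombination_eq_zero (hφ : IsRep F M φ) {D : Set α} (hD : D ⊆ M.E)
    {l : α →₀ F} (hlD : ↑l.support ⊆ D) (hl : l ≠ 0) (h : Finsupp.linearCombination F φ l = 0) :
    M.Dep D :=
  ⟨fun hI => hl (linearIndepOn_iff.1 ((hφ D hD).1 hI) l ((Finsupp.mem_supported F l).2 hlD) h), hD⟩

lemma IsRep.exists_linearCombination_eq (hφ : IsRep F M φ) {B : Set α} (hB : M.IsBase B)
    {x : α} (hx : x ∈ M.E) :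
    ∃ c : α →₀ F, ↑c.support ⊆ B ∧ Finsupp.linearCombination F φ c = φ x := by
  suffices φ x ∈ Submodule.span F (φ '' B) by
    obtain ⟨c, hc, hcx⟩ := (Finsupp.mem_span_image_iff_linearCombination F).1 this
    exact ⟨c, (Finsupp.mem_supported F c).1 hc, hcx⟩
  by_contra hspan
  have hxB : x ∉ B := fun h => hspan (Submodule.subset_span (Set.mem_image_of_mem φ h))
  have hI : LinearIndepOn F φ (insert x B) :=
    (linearIndepOn_insert hxB).2 ⟨(hφ B hB.subset_ground).1 hB.indep, hspan⟩
  exact (hB.insert_dep ⟨hx, hxB⟩).not_indep ((hφ _ (Set.insert_subset hx hB.subset_ground)).2 hI)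

lemma IsRep.rk_sub_lt_card_add_card {k : ℕ} (hφ : IsRep F M φ) {B : Set α} (hB : M.Indep B)
    {v c : α →₀ F} (hv : ∀ x ∈ v.support, M.KLoose k x) (hvB : Disjoint (↑v.support : Set α) B)
    (hv0 : v ≠ 0) (hcB : ↑c.support ⊆ B)
    (h : Finsupp.linearCombination F φ v = Finsupp.linearCombination F φ c) :
    M.rk - k < #v.support + #c.support := by
  classical
  set D : Finset α := v.support ∪ c.support
  have hvc : v - c ≠ 0 := by
    obtain ⟨x, hx⟩ := Finsupp.support_nonempty_iff.2 hv0
    have hcx : c x = 0 :=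
      Finsupp.notMem_support_iff.1 fun hx' => Set.disjoint_left.1 hvB hx (hcB hx')
    exact fun h0 => Finsupp.mem_support_iff.1 hx (by simpa [hcx] using DFunLike.congr_fun h0 x)
  have hDE : ↑D ⊆ M.E := by
    rw [coe_union]
    exact Set.union_subset (fun x hx => (hv x hx).1) (hcB.trans hB.subset_ground)
  have hdep : M.Dep ↑D := hφ.dep_of_linearCombination_eq_zero hDE
    (coe_subset.2 Finsupp.support_sub) hvc (by rw [map_sub, h, sub_self])
  have hindep : M.Indep (↑D \ ↑v.support) :=
    hB.subset (by rw [coe_union, Set.union_sdiff_left]; exact Set.sdiff_subset.trans hcB)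
  calc M.rk - k < (↑D : Set α).ncard := rk_sub_lt_ncard_of_dep hdep D.finite_toSet hv hindep
    _ = #D := Set.ncard_coe_finset _
    _ ≤ #v.support + #c.support := card_union_le _ _

lemma IsRep.rk_le_add_card_of_linearCombination_eq {k : ℕ} (hφ : IsRep F M φ) {B : Set α}
    (hB : M.Indep B) {x : α} (hx : M.KLoose k x) (hxB : x ∉ B) {c : α →₀ F}
    (hcB : ↑c.support ⊆ B) (hc : Finsupp.linearCombination F φ c = φ x) :
    M.rk ≤ k + #c.support := by
  classical
  have h := hφ.rk_sub_lt_card_add_card hB (v := Finsupp.single x 1) (c := c)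
    (by simpa using hx) (by simpa using hxB) (by simp) hcB (by simp [hc])
  rw [Finsupp.support_single _ one_ne_zero, card_singleton] at h
  omega

lemma IsRep.rk_le_add_card_of_linearCombination_eq_add_smul {k : ℕ} (hφ : IsRep F M φ)
    {B : Set α} (hB : M.Indep B) {e f : α} (hef : e ≠ f) (he : M.KLoose k e) (hf : M.KLoose k f)
    (heB : e ∉ B) (hfB : f ∉ B) {a : F} (ha : a ≠ 0) {c : α →₀ F} (hcB : ↑c.support ⊆ B)
    (hc : Finsupp.linearCombination F φ c = φ e + a • φ f) :
    M.rk ≤ k + 1 + #c.support := by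
  classical
  have hsupp := Finsupp.support_single_add_single hef one_ne_zero ha
  have h := hφ.rk_sub_lt_card_add_card (k := k) hB (v := Finsupp.single e 1 + Finsupp.single f a)
    (c := c) (by simp [hsupp, he, hf]) (by simp [hsupp, heB, hfB])
    (by simp [← Finsupp.support_eq_empty, hsupp]) hcB (by simp [hc])
  rw [hsupp, card_pair hef] at h
  omega

theorem IsRep.rk_add_one_le [Fintype F] [M.RankFinite] {k : ℕ} (hφ : IsRep F M φ) {B : Set α}
    (hB : M.IsBase B) {e f : α} (hef : e ≠ f) (he : M.KLoose k e) (hf : M.KLoose k f)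
    (heB : e ∉ B) (hfB : f ∉ B) :
    M.rk + 1 ≤ Fintype.card F * (k + 1) + k := by
  classical
  obtain ⟨u, huB, hu⟩ := hφ.exists_linearCombination_eq hB he.1
  obtain ⟨w, hwB, hw⟩ := hφ.exists_linearCombination_eq hB hf.1
  have hbound : ∀ a : F, M.rk + (if a = 0 then 1 else 0) ≤ k + 1 + #(u + a • w).support := by
    intro a
    by_cases ha : a = 0
    · have := hφ.rk_le_add_card_of_linearCombination_eq hB.indep he heB huB hu
      simp only [ha, if_true, zero_smul, add_zero]
      omega
    · have hsupp : ↑(u + a • w).support ⊆ B := by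
        refine (coe_subset.2 Finsupp.support_add).trans ?_
        rw [coe_union]
        exact Set.union_subset huB ((coe_subset.2 Finsupp.support_smul).trans hwB)
      simpa [ha] using hφ.rk_le_add_card_of_linearCombination_eq_add_smul hB.indep hef he hf heB
        hfB ha hsupp (by rw [map_add, map_smul, hu, hw])
  have hwbound := hφ.rk_le_add_card_of_linearCombination_eq hB.indep hf hfB hwB hw
  have hsum := sum_le_sum fun a (_ : a ∈ univ) => hbound a
  simp only [sum_add_distrib, sum_const, card_univ, smul_eq_mul, sum_ite_eq', mem_univ,
    if_true] at hsum
  have hT : #(u.support ∪ w.support) ≤ M.rk := by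
    rw [hB.rk_eq_ncard, ← Set.ncard_coe_finset, coe_union]
    exact Set.ncard_le_ncard (Set.union_subset huB hwB) hB.finite
  have hcount := Finsupp.sum_card_support_add_smul u w
  nlinarith

end Representation

end Matroid

theorem rank_bound_cosimple_general {α : Type*} (q k : ℕ)
    (F : Type) [Field F] [Fintype F] (hF : Fintype.card F = q)
    (M : Matroid α) [M.Finite] (hcosimple : M✶.Simple)
    (hrep : M.RepresentableOver F)
    (e f : α) (hef : e ≠ f) (he : M.KLoose k e) (hf : M.KLoose k f) :
    (M.rk : ℤ) ≤ (q + 1) * (k - 1) + 2 * q := by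
  obtain ⟨n, φ, hφ⟩ := hrep
  obtain ⟨-, B, hB, hefB⟩ := Matroid.dual_indep_iff_exists'.1 (hcosimple e he.1 f hf.1)
  have h := Matroid.IsRep.rk_add_one_le (F := F) hφ hB hef he hf
    (Set.disjoint_left.1 hefB (by simp)) (Set.disjoint_left.1 hefB (by simp))
  subst hF
  zify at h
  linarith

/-- A simple and cosimple `GF(q)`-representable matroid with two distinct `k`-loose
elements has rank at most `(q+1)(k-1) + 2q`. -/
theorem rank_bound_cosimple {α : Type*} (q k : ℕ) (hq : IsPrimePow q)
    (F : Type) [Field F] [Fintype F] (hF : Fintype.card F = q)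
    (M : Matroid α) [M.Finite] (hsimple : M.Simple) (hcosimple : M✶.Simple)
    (hrep : M.RepresentableOver F)
    (e f : α) (hef : e ≠ f) (he : M.KLoose k e) (hf : M.KLoose k f) :
    (M.rk : ℤ) ≤ (q + 1) * (k - 1) + 2 * q :=
  rank_bound_cosimple_general q k F hF M hcosimple hrep e f hef he hf
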